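/- Assume the index sets are ordered, i.e. I1 = {1,…,l} and I0 = {l+1,…,n}, and let f_i for i ∈ I0 be MAP decision rules, i.e. f_i(c_1^{i−1},y) is a maximizer of a ↦ μ_{C_i|C_1^{i−1}Y}(a | c_1^{i−1}, y) whenever Prob(C_1^{i−1} = c_1^{i−1}, Y = y) > 0. Then for every decoder φ : 𝒳^l × 𝒴^n → 𝒳^n and every i ∈ I0, Prob(f_i(C_1^{i−1}, Y) ≠ C_i) ≤ Prob(φ(AX,Y) ≠ X). -/
import Mathlib


open Finset

noncomputable def probOf {Ω : Type*} [Fintype Ω] (p : Ω → ℝ) (E : Set Ω) : ℝ :=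
  ∑ ω, E.indicator p ω

noncomputable def condProb {Ω : Type*} [Fintype Ω] (p : Ω → ℝ) (E F : Set Ω) : ℝ :=
  probOf p (E ∩ F) / probOf p F

noncomputable def entropyOf {Ω Z : Type*} [Fintype Ω] [Fintype Z] (p : Ω → ℝ) (V : Ω → Z) : ℝ :=
  ∑ z, Real.negMulLog (probOf p {ω | V ω = z})

noncomputable def condEntropyOf {Ω U V : Type*} [Fintype Ω] [Fintype U] [Fintype V]
    (p : Ω → ℝ) (Uv : Ω → U) (Vv : Ω → V) : ℝ :=
  entropyOf p (fun ω => (Uv ω, Vv ω)) - entropyOf p Vv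

def prefixVec {𝒳 : Type*} {n : ℕ} (c : Fin n → 𝒳) (m : ℕ) (h : m ≤ n) : Fin m → 𝒳 :=
  fun k => c ⟨k.1, lt_of_lt_of_le k.2 h⟩

def scVecGo {𝒳 : Type*} {n : ℕ} (g : (i : Fin n) → (Fin i.1 → 𝒳) → 𝒳) :
    (k : ℕ) → k < n → 𝒳
  | k, hk => g ⟨k, hk⟩ (fun j => scVecGo g j.1 (j.2.trans hk))
termination_by k _ => k
decreasing_by exact j.2

def scVec {𝒳 : Type*} {n : ℕ} (g : (i : Fin n) → (Fin i.1 → 𝒳) → 𝒳) : Fin n → 𝒳 :=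
  fun i => scVecGo g i.1 i.2

def scDec {𝒳 𝒴 : Type*} {n l : ℕ}
    (I1 : Finset (Fin n)) (hc1 : I1.card = l)
    (f : (i : Fin n) → (Fin i.1 → 𝒳) → (Fin n → 𝒴) → 𝒳)
    (c : Fin l → 𝒳) (y : Fin n → 𝒴) : Fin n → 𝒳 :=
  scVec (fun i pref => if h : i ∈ I1 then c ((I1.orderIsoOfFin hc1).symm ⟨i, h⟩) else f i pref y)

def scDecOrd {𝒳 𝒴 : Type*} {n l : ℕ}
    (f : (i : Fin n) → (Fin i.1 → 𝒳) → (Fin n → 𝒴) → 𝒳)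
    (c : Fin l → 𝒳) (y : Fin n → 𝒴) : Fin n → 𝒳 :=
  scVec (fun i pref => if h : i.1 < l then c ⟨i.1, h⟩ else f i pref y)

lemma probOf_nonneg' {Ω : Type*} [Fintype Ω] {p : Ω → ℝ} (hp : ∀ ω, 0 ≤ p ω) (E : Set Ω) :
    0 ≤ probOf p E :=
  Finset.sum_nonneg fun ω _ => Set.indicator_nonneg (fun ω _ => hp ω) ω

lemma probOf_mono' {Ω : Type*} [Fintype Ω] {p : Ω → ℝ} (hp : ∀ ω, 0 ≤ p ω) {E F : Set Ω}
    (h : E ⊆ F) : probOf p E ≤ probOf p F :=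
  Finset.sum_le_sum fun ω _ => Set.indicator_le_indicator_of_subset h hp ω

lemma probOf_partition' {Ω Z : Type*} [Fintype Ω] [Fintype Z]
    (p : Ω → ℝ) (E : Set Ω) (V : Ω → Z) :
    probOf p E = ∑ z, probOf p (E ∩ {ω | V ω = z}) := by
  classical
  unfold probOf
  rw [Finset.sum_comm]
  refine Finset.sum_congr rfl fun ω _ => ?_
  rw [Fintype.sum_eq_single (V ω) ?_]
  · by_cases h : ω ∈ E
    · have hmem : ω ∈ E ∩ {ω' | V ω' = V ω} := ⟨h, rfl⟩
      rw [Set.indicator_of_mem h, Set.indicator_of_mem hmem]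
    · rw [Set.indicator_of_notMem h, Set.indicator_of_notMem (fun hc => h hc.1)]
  · intro z hz
    exact Set.indicator_of_notMem (fun hc => hz hc.2.symm) _

lemma probOf_compl' {Ω : Type*} [Fintype Ω] (p : Ω → ℝ) (E : Set Ω) :
    probOf p Eᶜ = ∑ ω, p ω - probOf p E := by
  unfold probOf
  rw [eq_sub_iff_add_eq, ← Finset.sum_add_distrib]
  refine Finset.sum_congr rfl fun ω _ => ?_
  by_cases h : ω ∈ E
  · rw [Set.indicator_of_notMem (by simpa using h), Set.indicator_of_mem h]; ring
  · rw [Set.indicator_of_mem (by simpa using h), Set.indicator_of_notMem h]; ring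

/-- for ordered index sets `I1 = {1,…,l}`, `I0 = {l+1,…,n}` and MAP decision
rules `f_i`, for every decoder `φ` and every `i ∈ I0` one has
`Prob(f_i(C_1^{i-1}, Y) ≠ C_i) ≤ Prob(φ(AX,Y) ≠ X)`. -/
theorem stmt3
    {𝒳 𝒴 : Type*} [Fintype 𝒳] [Fintype 𝒴]
    (hcard : 2 ≤ Fintype.card 𝒳)
    (n l : ℕ) (hl : l ≤ n)
    (μ : ((Fin n → 𝒳) × (Fin n → 𝒴)) → ℝ)
    (hμ0 : ∀ ω, 0 ≤ μ ω) (hμ1 : ∑ ω, μ ω = 1)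
    (A : (Fin n → 𝒳) → (Fin l → 𝒳)) (B : (Fin n → 𝒳) → (Fin (n - l) → 𝒳))
    (T : (Fin n → 𝒳) ≃ (Fin n → 𝒳))
    (hT1 : ∀ x (j : Fin l), T x (Fin.castLE hl j) = A x j)
    (hT0 : ∀ x (j : Fin (n - l)), T x ⟨l + j.1, by have := j.2; omega⟩ = B x j)
    (f : (i : Fin n) → (Fin i.1 → 𝒳) → (Fin n → 𝒴) → 𝒳)
    (hMAP : ∀ (i : Fin n), l ≤ i.1 → ∀ (cp : Fin i.1 → 𝒳) (y : Fin n → 𝒴),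
      0 < probOf μ {ω | prefixVec (T ω.1) i.1 i.2.le = cp ∧ ω.2 = y} →
      ∀ a : 𝒳,
        condProb μ {ω | T ω.1 i = a} {ω | prefixVec (T ω.1) i.1 i.2.le = cp ∧ ω.2 = y} ≤
          condProb μ {ω | T ω.1 i = f i cp y}
            {ω | prefixVec (T ω.1) i.1 i.2.le = cp ∧ ω.2 = y})
    (φ : (Fin l → 𝒳) → (Fin n → 𝒴) → (Fin n → 𝒳)) :
    ∀ (i : Fin n), l ≤ i.1 →
      probOf μ {ω | f i (prefixVec (T ω.1) i.1 i.2.le) ω.2 ≠ T ω.1 i} ≤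
        probOf μ {ω | φ (A ω.1) ω.2 ≠ ω.1} := by
  intro i hi
  classical
  set g : (Fin i.1 → 𝒳) → (Fin n → 𝒴) → 𝒳 :=
    fun cp y => T (φ (fun j => cp ⟨j.1, lt_of_lt_of_le j.2 hi⟩) y) i with hg
  set Sf : Set ((Fin n → 𝒳) × (Fin n → 𝒴)) :=
    {ω | T ω.1 i = f i (prefixVec (T ω.1) i.1 i.2.le) ω.2} with hSf
  set Sg : Set ((Fin n → 𝒳) × (Fin n → 𝒴)) :=
    {ω | T ω.1 i = g (prefixVec (T ω.1) i.1 i.2.le) ω.2} with hSg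
  -- step 1 : Sgᶜ ⊆ {φ error}
  have hsub : Sgᶜ ⊆ {ω | φ (A ω.1) ω.2 ≠ ω.1} := by
    intro ω hω hφω
    apply hω
    have hA : (fun j : Fin l => prefixVec (T ω.1) i.1 i.2.le ⟨j.1, lt_of_lt_of_le j.2 hi⟩)
        = A ω.1 := by
      funext j
      exact hT1 ω.1 j
    show T ω.1 i = g (prefixVec (T ω.1) i.1 i.2.le) ω.2
    rw [hg]
    simp only
    rw [hA, hφω]
  -- step 2 : probOf Sg ≤ probOf Sf
  have hcmp : probOf μ Sg ≤ probOf μ Sf := by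
    have V : ((Fin n → 𝒳) × (Fin n → 𝒴)) → (Fin i.1 → 𝒳) × (Fin n → 𝒴) :=
      fun ω => (prefixVec (T ω.1) i.1 i.2.le, ω.2)
    rw [probOf_partition' μ Sg (fun ω => (prefixVec (T ω.1) i.1 i.2.le, ω.2)),
        probOf_partition' μ Sf (fun ω => (prefixVec (T ω.1) i.1 i.2.le, ω.2))]
    refine Finset.sum_le_sum fun z _ => ?_
    obtain ⟨cp, y⟩ := z
    have hFeq : {ω : (Fin n → 𝒳) × (Fin n → 𝒴) |
        (prefixVec (T ω.1) i.1 i.2.le, ω.2) = (cp, y)} =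
        {ω | prefixVec (T ω.1) i.1 i.2.le = cp ∧ ω.2 = y} := by
      ext ω; simp [Prod.ext_iff]
    have key : ∀ (h : (Fin i.1 → 𝒳) → (Fin n → 𝒴) → 𝒳),
        {ω : (Fin n → 𝒳) × (Fin n → 𝒴) | T ω.1 i = h (prefixVec (T ω.1) i.1 i.2.le) ω.2} ∩
          {ω | prefixVec (T ω.1) i.1 i.2.le = cp ∧ ω.2 = y}
        = {ω | T ω.1 i = h cp y} ∩ {ω | prefixVec (T ω.1) i.1 i.2.le = cp ∧ ω.2 = y} := by
      intro h; ext ω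
      simp only [Set.mem_inter_iff, Set.mem_setOf_eq]
      constructor
      · rintro ⟨h1, h2, h3⟩; rw [h2, h3] at h1; exact ⟨h1, h2, h3⟩
      · rintro ⟨h1, h2, h3⟩; exact ⟨by rw [h2, h3]; exact h1, h2, h3⟩
    rw [hSg, hSf, hFeq, key g, key (f i)]
    by_cases hF : 0 < probOf μ {ω : (Fin n → 𝒳) × (Fin n → 𝒴) |
        prefixVec (T ω.1) i.1 i.2.le = cp ∧ ω.2 = y}
    · have hm := hMAP i hi cp y hF (g cp y)
      unfold condProb at hm
      exact (div_le_div_iff_of_pos_right hF).mp hm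
    · push_neg at hF
      have h0 : probOf μ {ω : (Fin n → 𝒳) × (Fin n → 𝒴) |
          prefixVec (T ω.1) i.1 i.2.le = cp ∧ ω.2 = y} = 0 :=
        le_antisymm hF (probOf_nonneg' hμ0 _)
      calc probOf μ _ ≤ (0 : ℝ) := h0 ▸ probOf_mono' hμ0 Set.inter_subset_right
        _ ≤ _ := probOf_nonneg' hμ0 _
  -- step 3 : rewrite error probabilities as complements
  have hEf : {ω : (Fin n → 𝒳) × (Fin n → 𝒴) |
      f i (prefixVec (T ω.1) i.1 i.2.le) ω.2 ≠ T ω.1 i} = Sfᶜ := by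
    ext ω
    simp only [hSf, Set.mem_compl_iff, Set.mem_setOf_eq]
    exact ⟨fun h hc => h hc.symm, fun h hc => h hc.symm⟩
  calc probOf μ {ω : (Fin n → 𝒳) × (Fin n → 𝒴) |
        f i (prefixVec (T ω.1) i.1 i.2.le) ω.2 ≠ T ω.1 i}
      = ∑ ω, μ ω - probOf μ Sf := by rw [hEf, probOf_compl']
    _ ≤ ∑ ω, μ ω - probOf μ Sg := by linarith
    _ = probOf μ Sgᶜ := (probOf_compl' μ Sg).symm
    _ ≤ probOf μ {ω | φ (A ω.1) ω.2 ≠ ω.1} := probOf_mono' hμ0 hsub
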